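/- Let B be a Boolean algebra, M a finite De Morgan algebra, and Y : M → B any function. Then for all p ∈ M: Σ_{q ≤ p} ( Σ_{sup A = q} Π_{r∈A} Y_r · −Σ_{sup A > q} Π_{r∈A} Y_r ) = ( Σ_{q ≤ p} Y_q ) · ( Π_{q ≰ p} −Y_q ), where sums over A range over nonempty subsets of M and ≤ is the lattice order of M. -/
import Mathlib


attribute [local instance] Classical.propDecidable

/-- A De Morgan algebra: a bounded distributive lattice with an involutive
negation satisfying De Morgan's laws. -/
class DeMorganAlgebra (M : Type*) extends DistribLattice M, BoundedOrder M where
  dneg : M → M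
  dneg_sup : ∀ x y : M, dneg (x ⊔ y) = dneg x ⊓ dneg y
  dneg_inf : ∀ x y : M, dneg (x ⊓ y) = dneg x ⊔ dneg y
  dneg_dneg : ∀ x : M, dneg (dneg x) = x

/-- `layerOp Y q = Σ_{sup A = q} Π_{r∈A} Y_r · −Σ_{sup A > q} Π_{r∈A} Y_r`
(sums over nonempty `A ⊆ M`). -/
noncomputable def layerOp {M B : Type*} [Fintype M] [DeMorganAlgebra M] [BooleanAlgebra B]
    (Y : M → B) (q : M) : B :=
  ((Finset.univ.powerset.filter fun A : Finset M => A.Nonempty ∧ A.sup id = q).sup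
      fun A => A.inf fun r => Y r) ⊓
    ((Finset.univ.powerset.filter fun A : Finset M => A.Nonempty ∧ q < A.sup id).sup
      fun A => A.inf fun r => Y r)ᶜ

/-- Second Boolean identity (Theorem 2.10 of the paper). -/
theorem stmt_8 {M B : Type*} [Fintype M] [DeMorganAlgebra M] [BooleanAlgebra B]
    (Y : M → B) :
    ∀ p : M,
      (Finset.univ.filter fun q : M => q ≤ p).sup (fun q => layerOp Y q) =
        ((Finset.univ.filter fun q : M => q ≤ p).sup Y) ⊓
          ((Finset.univ.filter fun q : M => ¬ q ≤ p).inf fun q => (Y q)ᶜ) := by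
  intro p
  set S : M → B := fun q =>
    (Finset.univ.powerset.filter fun A : Finset M => A.Nonempty ∧ A.sup id = q).sup
      fun A => A.inf fun r => Y r with hS
  set T : M → B := fun q =>
    (Finset.univ.powerset.filter fun A : Finset M => A.Nonempty ∧ q < A.sup id).sup
      fun A => A.inf fun r => Y r with hT
  have hlayer : ∀ q, layerOp Y q = S q ⊓ (T q)ᶜ := fun q => rfl
  set N : B := (Finset.univ.filter fun q : M => ¬ q ≤ p).inf (fun q => (Y q)ᶜ) with hN
  set U : B := (Finset.univ.filter fun q : M => q ≤ p).sup Y with hU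
  set L : B := (Finset.univ.filter fun q : M => q ≤ p).sup (fun q => layerOp Y q) with hL
  have memS : ∀ {A : Finset M} {q : M}, A.Nonempty → A.sup id = q →
      (A.inf fun r => Y r) ≤ S q := by
    intro A q h1 h2
    rw [hS]
    exact Finset.le_sup (Finset.mem_filter.mpr
      ⟨Finset.mem_powerset.mpr (Finset.subset_univ A), h1, h2⟩)
  have memT : ∀ {A : Finset M} {q : M}, A.Nonempty → q < A.sup id →
      (A.inf fun r => Y r) ≤ T q := by
    intro A q h1 h2
    rw [hT]
    exact Finset.le_sup (Finset.mem_filter.mpr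
      ⟨Finset.mem_powerset.mpr (Finset.subset_univ A), h1, h2⟩)
  have hlayerL : ∀ {q : M}, q ≤ p → layerOp Y q ≤ L := by
    intro q hq
    rw [hL]
    exact Finset.le_sup (Finset.mem_filter.mpr ⟨Finset.mem_univ _, hq⟩)
  have hNle : ∀ {r : M}, ¬ r ≤ p → N ≤ (Y r)ᶜ := by
    intro r hr
    rw [hN]
    exact Finset.inf_le (Finset.mem_filter.mpr ⟨Finset.mem_univ _, hr⟩)
  refine le_antisymm ?_ ?_
  · -- L ≤ U ⊓ N
    rw [hL]
    refine Finset.sup_le ?_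
    intro q hq
    rw [Finset.mem_filter] at hq
    have hqp : q ≤ p := hq.2
    rw [hlayer]
    refine le_inf ?_ ?_
    · -- S q ⊓ (T q)ᶜ ≤ U
      refine le_trans inf_le_left ?_
      rw [hS]
      refine Finset.sup_le ?_
      intro A hA
      rw [Finset.mem_filter] at hA
      obtain ⟨-, hne, hsup⟩ := hA
      obtain ⟨r, hr⟩ := hne
      have hrq : r ≤ q := by
        rw [← hsup]; exact Finset.le_sup (f := id) hr
      refine le_trans (Finset.inf_le hr) ?_
      rw [hU]
      exact Finset.le_sup (Finset.mem_filter.mpr ⟨Finset.mem_univ _, hrq.trans hqp⟩)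
    · -- S q ⊓ (T q)ᶜ ≤ N
      rw [hN]
      refine Finset.le_inf ?_
      intro q' hq'
      rw [Finset.mem_filter] at hq'
      have hq'p : ¬ q' ≤ p := hq'.2
      have hST : S q ⊓ Y q' ≤ T q := by
        rw [hS, Finset.sup_inf_distrib_right]
        refine Finset.sup_le ?_
        intro A hA
        rw [Finset.mem_filter] at hA
        obtain ⟨-, hne, hsup⟩ := hA
        have heq : (A.inf fun r => Y r) ⊓ Y q' = (insert q' A).inf fun r => Y r := by
          rw [Finset.inf_insert, inf_comm]
        rw [heq]
        refine memT (Finset.insert_nonempty _ _) ?_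
        rw [Finset.sup_insert, hsup]
        have hq'q : ¬ q' ≤ q := fun h => hq'p (h.trans hqp)
        simpa using right_lt_sup.mpr hq'q
      have hdisj : S q ⊓ (T q)ᶜ ⊓ Y q' ≤ ⊥ :=
        calc S q ⊓ (T q)ᶜ ⊓ Y q' = S q ⊓ Y q' ⊓ (T q)ᶜ := by ac_rfl
          _ ≤ T q ⊓ (T q)ᶜ := inf_le_inf_right _ hST
          _ = ⊥ := inf_compl_eq_bot
      exact le_compl_iff_disjoint_right.mpr (disjoint_iff_inf_le.mpr hdisj)
  · -- U ⊓ N ≤ L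
    have key : ∀ n : ℕ, ∀ q0 : M, (Finset.univ.filter fun r => q0 < r).card < n →
        q0 ≤ p → ∀ A : Finset M, A.Nonempty → A.sup id = q0 →
        (A.inf fun r => Y r) ⊓ N ≤ L := by
      intro n
      induction n with
      | zero => intro q0 h; exact absurd h (Nat.not_lt_zero _)
      | succ n IH =>
        intro q0 hcard hq0 A hne hsup
        have hsplit : (A.inf fun r => Y r) ⊓ N =
            ((A.inf fun r => Y r) ⊓ N ⊓ (T q0)ᶜ) ⊔ ((A.inf fun r => Y r) ⊓ N ⊓ T q0) := by
          rw [← inf_sup_left, compl_sup_eq_top, inf_top_eq]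
        rw [hsplit]
        refine sup_le ?_ ?_
        · -- first part ≤ layerOp Y q0 ≤ L
          refine le_trans ?_ (hlayerL hq0)
          rw [hlayer]
          exact inf_le_inf_right _ (le_trans inf_le_left (memS hne hsup))
        · -- second part
          rw [hT, Finset.sup_inf_distrib_left]
          refine Finset.sup_le ?_
          intro A' hA'
          rw [Finset.mem_filter] at hA'
          obtain ⟨-, hne', hlt'⟩ := hA'
          by_cases hsp : A'.sup id ≤ p
          · -- use IH at A'.sup id
            have hsub : (Finset.univ.filter fun r => A'.sup id < r) ⊆
                (Finset.univ.filter fun r => q0 < r) := by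
              intro r hr
              rw [Finset.mem_filter] at hr ⊢
              exact ⟨hr.1, lt_trans hlt' hr.2⟩
            have hmem : A'.sup id ∈ (Finset.univ.filter fun r => q0 < r) :=
              Finset.mem_filter.mpr ⟨Finset.mem_univ _, hlt'⟩
            have hnot : A'.sup id ∉ (Finset.univ.filter fun r => A'.sup id < r) := by
              simp
            have hcard' : (Finset.univ.filter fun r => A'.sup id < r).card <
                (Finset.univ.filter fun r => q0 < r).card :=
              Finset.card_lt_card ((Finset.ssubset_iff_of_subset hsub).mpr
                ⟨_, hmem, hnot⟩)
            have hIH := IH (A'.sup id) (by omega) hsp (A ∪ A')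
              (hne.mono Finset.subset_union_left)
              (by rw [Finset.sup_union, hsup, sup_eq_right.mpr hlt'.le])
            refine le_trans (le_of_eq ?_) hIH
            rw [Finset.inf_union]
            ac_rfl
          · -- A'.sup id ≰ p : term is ⊥
            obtain ⟨r, hrA', hrp⟩ : ∃ r ∈ A', ¬ r ≤ p := by
              by_contra h
              push_neg at h
              exact hsp (Finset.sup_le fun r hr => h r hr)
            have h1 : (A'.inf fun r => Y r) ≤ Y r := Finset.inf_le hrA'
            have h2 : N ≤ (Y r)ᶜ := hNle hrp
            calc (A.inf fun r => Y r) ⊓ N ⊓ (A'.inf fun r => Y r)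
                ≤ N ⊓ (A'.inf fun r => Y r) := inf_le_inf_right _ inf_le_right
              _ ≤ (Y r)ᶜ ⊓ Y r := inf_le_inf h2 h1
              _ = ⊥ := compl_inf_eq_bot
              _ ≤ L := bot_le
    rw [hU, Finset.sup_inf_distrib_right]
    refine Finset.sup_le ?_
    intro q hq
    rw [Finset.mem_filter] at hq
    have := key ((Finset.univ.filter fun r => q < r).card + 1) q (Nat.lt_succ_self _)
      hq.2 {q} (Finset.singleton_nonempty q) (by simp)
    simpa using this
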